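/- arXiv:2602.11986 — 2 statements merged into one kernel-verified Lean document; each statement's English description precedes it below -/
import Mathlib

section
/- Per-letter mutual information between the dirty paper auxiliary variables: let α ∈ (0,1), P, N₁ > 0, ᾱ = 1−α, and let X₁ ~ N(0,αP), X₂ ~ N(0,ᾱP) be independent real Gaussians; set b₂ = αP/(αP+N₁), U₁ = b₂·X₂ + X₁, U₂ = X₂. Then the Kullback–Leibler divergence of the joint law of (U₁,U₂) from the product of its marginals equals (1/2)·ln( (b₂²·ᾱP + αP)/(αP) ) (in nats); equivalently I(U₁;U₂) = (1/2)·log₂( σ²_{U₁}/σ²_{U₁|U₂} ) where σ²_{U₁} = Var(U₁) = b₂²ᾱP + αP and σ²_{U₁|U₂} = αP is the conditional variance of U₁ given U₂. -/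
open MeasureTheory ProbabilityTheory Real

noncomputable section

open Filter Set
open scoped ENNReal NNReal

namespace DPAux

lemma integrable_sq_exp {b : ℝ} (hb : 0 < b) :
    Integrable (fun x : ℝ => x ^ 2 * rexp (-b * x ^ 2)) := by
  have h := integrable_rpow_mul_exp_neg_mul_sq hb (s := 2) (by norm_num)
  have : ∀ x : ℝ, x ^ (2 : ℝ) = x ^ 2 := fun x => by
    rw [show (2:ℝ) = ((2:ℕ):ℝ) by norm_num, Real.rpow_natCast]
  simpa [this] using h

lemma tendsto_mul_exp_atTop {b : ℝ} (hb : 0 < b) :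
    Tendsto (fun x : ℝ => x * rexp (-b * x ^ 2)) atTop (nhds 0) := by
  have h := rpow_mul_exp_neg_mul_sq_isLittleO_exp_neg hb 1
  have h2 : Tendsto (fun x : ℝ => rexp (-(1 / 2) * x)) atTop (nhds 0) := by
    have : Tendsto (fun x : ℝ => -(1 / 2) * x) atTop atBot :=
      Tendsto.const_mul_atTop_of_neg (by norm_num) tendsto_id
    exact Real.tendsto_exp_atBot.comp this
  have := h.trans_tendsto h2
  refine this.congr' ?_
  filter_upwards [eventually_gt_atTop (0:ℝ)] with x hx
  rw [Real.rpow_one]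

lemma integral_Ioi_sq_exp {b : ℝ} (hb : 0 < b) :
    ∫ x in Ioi (0:ℝ), x ^ 2 * rexp (-b * x ^ 2) = √(π / b) / (4 * b) := by
  have hderiv : ∀ x ∈ Ici (0:ℝ),
      HasDerivAt (fun y : ℝ => -(y * rexp (-b * y ^ 2)) / (2 * b))
        (x ^ 2 * rexp (-b * x ^ 2) - rexp (-b * x ^ 2) / (2 * b)) x := by
    intro x _
    have h1 : HasDerivAt (fun y : ℝ => -b * y ^ 2) (-b * (2 * x)) x := by
      simpa using ((hasDerivAt_pow 2 x).const_mul (-b))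
    have h2 : HasDerivAt (fun y : ℝ => rexp (-b * y ^ 2)) (rexp (-b * x ^ 2) * (-b * (2 * x))) x :=
      (Real.hasDerivAt_exp _).comp x h1
    have h3 : HasDerivAt (fun y : ℝ => y * rexp (-b * y ^ 2))
        (1 * rexp (-b * x ^ 2) + x * (rexp (-b * x ^ 2) * (-b * (2 * x)))) x :=
      (hasDerivAt_id x).mul h2
    have h4 := (h3.neg).div_const (2 * b)
    refine h4.congr_deriv ?_
    field_simp
    ring
  have hint : IntegrableOn
      (fun x : ℝ => x ^ 2 * rexp (-b * x ^ 2) - rexp (-b * x ^ 2) / (2 * b)) (Ioi 0) := by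
    exact ((integrable_sq_exp hb).sub ((integrable_exp_neg_mul_sq hb).div_const _)).integrableOn
  have hlim : Tendsto (fun y : ℝ => -(y * rexp (-b * y ^ 2)) / (2 * b)) atTop (nhds 0) := by
    have := (tendsto_mul_exp_atTop hb).neg.div_const (2 * b)
    simpa using this
  have key := integral_Ioi_of_hasDerivAt_of_tendsto' hderiv hint hlim
  have hsplit : ∫ x in Ioi (0:ℝ), (x ^ 2 * rexp (-b * x ^ 2) - rexp (-b * x ^ 2) / (2 * b))
      = (∫ x in Ioi (0:ℝ), x ^ 2 * rexp (-b * x ^ 2))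
        - ∫ x in Ioi (0:ℝ), rexp (-b * x ^ 2) / (2 * b) :=
    integral_sub ((integrable_sq_exp hb).integrableOn)
      (((integrable_exp_neg_mul_sq hb).div_const _).integrableOn)
  rw [hsplit] at key
  have hg : ∫ x in Ioi (0:ℝ), rexp (-b * x ^ 2) / (2 * b) = (√(π / b) / 2) / (2 * b) := by
    rw [integral_div, integral_gaussian_Ioi]
  rw [hg] at key
  have : (∫ x in Ioi (0:ℝ), x ^ 2 * rexp (-b * x ^ 2)) = √(π / b) / 2 / (2 * b) := by
    have h0 : -(0 * rexp (-b * 0 ^ 2)) / (2 * b) = 0 := by simp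
    linarith [key, h0 ▸ key]
  rw [this]; ring

lemma integral_sq_exp {b : ℝ} (hb : 0 < b) :
    ∫ x : ℝ, x ^ 2 * rexp (-b * x ^ 2) = √(π / b) / (2 * b) := by
  have heven : ∫ x in Iic (0:ℝ), x ^ 2 * rexp (-b * x ^ 2)
      = ∫ x in Ioi (0:ℝ), x ^ 2 * rexp (-b * x ^ 2) := by
    have := integral_comp_neg_Iic (0:ℝ) (fun x : ℝ => x ^ 2 * rexp (-b * x ^ 2))
    simp only [neg_zero] at this
    rw [← this]
    congr 1
    ext x
    ring_nf
  rw [← intervalIntegral.integral_Iic_add_Ioi (b := (0:ℝ)) ((integrable_sq_exp hb).integrableOn)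
      ((integrable_sq_exp hb).integrableOn), heven, integral_Ioi_sq_exp hb]
  ring

end DPAux

namespace DPAux2

open DPAux

lemma gaussianPDFReal_factor {v₁ v₂ : ℝ} (h₁ : 0 < v₁) (h₂ : 0 < v₂) (c u x : ℝ) :
    gaussianPDFReal 0 v₁.toNNReal (u - c * x) * gaussianPDFReal 0 v₂.toNNReal x
      = gaussianPDFReal 0 (v₁ + c ^ 2 * v₂).toNNReal u
        * gaussianPDFReal (c * v₂ * u / (v₁ + c ^ 2 * v₂))
            ((v₁ * v₂ / (v₁ + c ^ 2 * v₂)).toNNReal) x := by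
  have hs : 0 < v₁ + c ^ 2 * v₂ := by positivity
  have h3 : 0 < v₁ * v₂ / (v₁ + c ^ 2 * v₂) := by positivity
  simp only [gaussianPDFReal, Real.coe_toNNReal _ h₁.le, Real.coe_toNNReal _ h₂.le,
    Real.coe_toNNReal _ hs.le, Real.coe_toNNReal _ h3.le, sub_zero]
  rw [mul_mul_mul_comm, mul_mul_mul_comm ((√(2 * π * (v₁ + c ^ 2 * v₂)))⁻¹)]
  congr 1
  · rw [← mul_inv, ← mul_inv, ← Real.sqrt_mul (by positivity), ← Real.sqrt_mul (by positivity)]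
    congr 1
    field_simp
  · rw [← Real.exp_add, ← Real.exp_add]
    congr 1
    field_simp
    ring

lemma toNNReal_ne_zero {v : ℝ} (hv : 0 < v) : v.toNNReal ≠ 0 := by
  simp [Real.toNNReal_eq_zero, not_le, hv]

lemma pdf_smul_eq {v : ℝ} (hv : 0 < v) (g : ℝ → ℝ) (x : ℝ) :
    ((gaussianPDFReal 0 v.toNNReal x).toNNReal : ℝ≥0) • g x
      = (√(2 * π * v))⁻¹ * (rexp (-(2 * v)⁻¹ * x ^ 2) * g x) := by
  rw [NNReal.smul_def, smul_eq_mul, Real.coe_toNNReal _ (gaussianPDFReal_nonneg _ _ _)]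
  simp only [gaussianPDFReal, Real.coe_toNNReal _ hv.le, sub_zero]
  rw [mul_assoc]
  congr 2
  rw [neg_div, div_eq_mul_inv, mul_comm, neg_mul]

lemma integrable_sq_gaussianReal {v : ℝ} (hv : 0 < v) :
    Integrable (fun x : ℝ => x ^ 2) (gaussianReal 0 v.toNNReal) := by
  rw [gaussianReal_of_var_ne_zero _ (toNNReal_ne_zero hv)]
  have hmeas : Measurable fun x => (gaussianPDFReal 0 v.toNNReal x).toNNReal :=
    (measurable_gaussianPDFReal _ _).real_toNNReal
  have : (gaussianPDF 0 v.toNNReal) = fun x => ((gaussianPDFReal 0 v.toNNReal x).toNNReal : ℝ≥0∞) :=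
    rfl
  rw [this, integrable_withDensity_iff_integrable_smul hmeas]
  have heq : (fun x : ℝ => ((gaussianPDFReal 0 v.toNNReal x).toNNReal : ℝ≥0) • x ^ 2)
      = fun x : ℝ => (√(2 * π * v))⁻¹ * (x ^ 2 * rexp (-(2 * v)⁻¹ * x ^ 2)) := by
    funext x; rw [pdf_smul_eq hv (fun y => y ^ 2) x]; ring
  rw [heq]
  exact (integrable_sq_exp (by positivity)).const_mul _

lemma integral_sq_gaussianReal {v : ℝ} (hv : 0 < v) :
    ∫ x, x ^ 2 ∂(gaussianReal 0 v.toNNReal) = v := by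
  rw [gaussianReal_of_var_ne_zero _ (toNNReal_ne_zero hv)]
  have hmeas : Measurable fun x => (gaussianPDFReal 0 v.toNNReal x).toNNReal :=
    (measurable_gaussianPDFReal _ _).real_toNNReal
  have h1 : (gaussianPDF 0 v.toNNReal)
      = fun x => ((gaussianPDFReal 0 v.toNNReal x).toNNReal : ℝ≥0∞) := rfl
  rw [h1, integral_withDensity_eq_integral_smul hmeas]
  have heq : (fun x : ℝ => ((gaussianPDFReal 0 v.toNNReal x).toNNReal : ℝ≥0) • x ^ 2)
      = fun x : ℝ => (√(2 * π * v))⁻¹ * (x ^ 2 * rexp (-(2 * v)⁻¹ * x ^ 2)) := by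
    funext x
    rw [pdf_smul_eq hv (fun y => y ^ 2) x]
    ring
  rw [heq, integral_const_mul, integral_sq_exp (by positivity : (0:ℝ) < (2 * v)⁻¹)]
  have hπ : π / (2 * v)⁻¹ = 2 * π * v := by field_simp
  rw [hπ]
  have hsq : √(2 * π * v) ≠ 0 := by positivity
  field_simp

lemma log_gaussianPDFReal {v : ℝ} (hv : 0 < v) (x : ℝ) :
    Real.log (gaussianPDFReal 0 v.toNNReal x) = -Real.log (√(2 * π * v)) - x ^ 2 / (2 * v) := by
  simp only [gaussianPDFReal, Real.coe_toNNReal _ hv.le, sub_zero]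
  rw [Real.log_mul (inv_ne_zero (by positivity)) (Real.exp_ne_zero _), Real.log_inv, Real.log_exp]
  ring

lemma integrable_log_pdf_gaussianReal {v w : ℝ} (hv : 0 < v) (hw : 0 < w) :
    Integrable (fun x => Real.log (gaussianPDFReal 0 w.toNNReal x)) (gaussianReal 0 v.toNNReal) := by
  have heq : (fun x => Real.log (gaussianPDFReal 0 w.toNNReal x))
      = fun x : ℝ => -Real.log (√(2 * π * w)) - x ^ 2 / (2 * w) := by
    funext x; exact log_gaussianPDFReal hw x
  rw [heq]
  exact (integrable_const _).sub ((integrable_sq_gaussianReal hv).div_const _)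

lemma integral_log_pdf_gaussianReal {v w : ℝ} (hv : 0 < v) (hw : 0 < w) :
    ∫ x, Real.log (gaussianPDFReal 0 w.toNNReal x) ∂(gaussianReal 0 v.toNNReal)
      = -Real.log (√(2 * π * w)) - v / (2 * w) := by
  have heq : (fun x => Real.log (gaussianPDFReal 0 w.toNNReal x))
      = fun x : ℝ => -Real.log (√(2 * π * w)) - x ^ 2 / (2 * w) := by
    funext x; exact log_gaussianPDFReal hw x
  rw [heq, integral_sub (integrable_const _) ((integrable_sq_gaussianReal hv).div_const _),
    integral_const, integral_div, integral_sq_gaussianReal hv]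
  simp

end DPAux2

namespace DPAux3

open DPAux DPAux2

def shear (c : ℝ) : ℝ × ℝ ≃ᵐ ℝ × ℝ where
  toFun p := (c * p.2 + p.1, p.2)
  invFun p := (p.1 - c * p.2, p.2)
  left_inv p := by simp
  right_inv p := by simp
  measurable_toFun := ((measurable_snd.const_mul c).add measurable_fst).prodMk measurable_snd
  measurable_invFun := (measurable_fst.sub (measurable_snd.const_mul c)).prodMk measurable_snd

lemma measurePreserving_shear (c : ℝ) :
    MeasurePreserving (shear c) ((volume : Measure ℝ).prod volume) (volume.prod volume) := by
  have h1 : MeasurePreserving (fun q : ℝ × ℝ => (q.1, c * q.1 + q.2))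
      ((volume : Measure ℝ).prod volume) (volume.prod volume) :=
    (MeasurePreserving.id volume).skew_product (g := fun a y => c * a + y)
      ((measurable_fst.const_mul c).add measurable_snd)
      (Filter.Eventually.of_forall fun a => map_add_left_eq_self volume (c * a))
  have h2 := (Measure.measurePreserving_swap.comp h1).comp Measure.measurePreserving_swap
  exact h2

lemma map_withDensity_equiv {ν : Measure (ℝ × ℝ)} [SigmaFinite ν] (e : ℝ × ℝ ≃ᵐ ℝ × ℝ)
    (hpres : MeasurePreserving e ν ν) {h : ℝ × ℝ → ℝ≥0∞} (hm : Measurable h) :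
    (ν.withDensity h).map e = ν.withDensity fun p => h (e.symm p) := by
  ext s hs
  rw [Measure.map_apply e.measurable hs, withDensity_apply _ (e.measurable hs),
    withDensity_apply _ hs]
  have hstep : ∫⁻ p in s, h (e.symm p) ∂ν = ∫⁻ p in s, h (e.symm p) ∂(ν.map e) := by
    rw [hpres.map_eq]
  have hmap := setLIntegral_map (μ := ν) (s := s) (f := fun p => h (e.symm p)) hs
    (hm.comp e.symm.measurable) e.measurable
  rw [hstep, hmap]
  simp only [MeasurableEquiv.symm_apply_apply]

lemma gaussian_prod_eq {m₁ m₂ : ℝ} {V₁ V₂ : ℝ≥0} (h₁ : V₁ ≠ 0) (h₂ : V₂ ≠ 0) :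
    (gaussianReal m₁ V₁).prod (gaussianReal m₂ V₂)
      = ((volume : Measure ℝ).prod volume).withDensity
          fun p => gaussianPDF m₁ V₁ p.1 * gaussianPDF m₂ V₂ p.2 := by
  refine Measure.prod_eq fun s t hs ht => ?_
  rw [withDensity_apply _ (hs.prod ht), ← Measure.prod_restrict,
    lintegral_prod_mul ((measurable_gaussianPDF _ _).aemeasurable)
      ((measurable_gaussianPDF _ _).aemeasurable),
    gaussianReal_apply _ h₁, gaussianReal_apply _ h₂]

lemma gaussianPDF_factor {v₁ v₂ : ℝ} (h₁ : 0 < v₁) (h₂ : 0 < v₂) (c u x : ℝ) :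
    gaussianPDF 0 v₁.toNNReal (u - c * x) * gaussianPDF 0 v₂.toNNReal x
      = gaussianPDF 0 (v₁ + c ^ 2 * v₂).toNNReal u
        * gaussianPDF (c * v₂ * u / (v₁ + c ^ 2 * v₂))
            ((v₁ * v₂ / (v₁ + c ^ 2 * v₂)).toNNReal) x := by
  simp only [gaussianPDF]
  rw [← ENNReal.ofReal_mul (gaussianPDFReal_nonneg _ _ _),
    ← ENNReal.ofReal_mul (gaussianPDFReal_nonneg _ _ _)]
  exact congrArg _ (gaussianPDFReal_factor h₁ h₂ c u x)

lemma map_fst_density {v₁ v₂ : ℝ} (h₁ : 0 < v₁) (h₂ : 0 < v₂) (c : ℝ) :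
    (((volume : Measure ℝ).prod volume).withDensity
        (fun p => gaussianPDF 0 v₁.toNNReal (p.1 - c * p.2) * gaussianPDF 0 v₂.toNNReal p.2)).map
        Prod.fst
      = gaussianReal 0 (v₁ + c ^ 2 * v₂).toNNReal := by
  have hs' : (0:ℝ) < v₁ + c ^ 2 * v₂ := by positivity
  have hmeasD : Measurable fun p : ℝ × ℝ =>
      gaussianPDF 0 v₁.toNNReal (p.1 - c * p.2) * gaussianPDF 0 v₂.toNNReal p.2 :=
    ((measurable_gaussianPDF _ _).comp (measurable_fst.sub (measurable_snd.const_mul c))).mul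
      ((measurable_gaussianPDF _ _).comp measurable_snd)
  ext s hs
  rw [Measure.map_apply measurable_fst hs, withDensity_apply _ (measurable_fst hs)]
  have hpre : (Prod.fst ⁻¹' s : Set (ℝ × ℝ)) = s ×ˢ (Set.univ : Set ℝ) := by
    ext p; simp
  rw [hpre, ← Measure.prod_restrict, Measure.restrict_univ,
    MeasureTheory.lintegral_prod _ hmeasD.aemeasurable]
  have hinner : ∀ u : ℝ,
      (∫⁻ x, gaussianPDF 0 v₁.toNNReal (u - c * x) * gaussianPDF 0 v₂.toNNReal x)
        = gaussianPDF 0 (v₁ + c ^ 2 * v₂).toNNReal u := by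
    intro u
    simp_rw [fun x => gaussianPDF_factor h₁ h₂ c u x]
    rw [lintegral_const_mul _ (measurable_gaussianPDF _ _),
      lintegral_gaussianPDF_eq_one _ (toNNReal_ne_zero (by positivity)), mul_one]
  simp_rw [hinner]
  rw [gaussianReal_apply _ (toNNReal_ne_zero hs')]

end DPAux3

/-- Per-letter mutual information between the dirty paper auxiliary variables
`U₁ = b₂ X₂ + X₁` and `U₂ = X₂`: the Kullback–Leibler divergence of the joint law
from the product of the marginals (expressed as the expected log Radon–Nikodym
derivative) equals `(1/2)·ln((b₂²ᾱP + αP)/(αP))` in nats, equivalently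
`(1/2)·log₂(σ²_{U₁}/σ²_{U₁|U₂})` in bits with `σ²_{U₁} = b₂²ᾱP + αP` and
`σ²_{U₁|U₂} = αP`. -/
theorem dirty_paper_mutual_information
    (α P N₁ : ℝ) (hα : α ∈ Set.Ioo (0 : ℝ) 1) (hP : 0 < P) (hN₁ : 0 < N₁)
    (Ω : Type*) [MeasurableSpace Ω] (μ : Measure Ω) [IsProbabilityMeasure μ]
    (X₁ X₂ : Ω → ℝ)
    (hmX₁ : Measurable X₁) (hmX₂ : Measurable X₂)
    (hX₁ : μ.map X₁ = gaussianReal 0 (Real.toNNReal (α * P)))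
    (hX₂ : μ.map X₂ = gaussianReal 0 (Real.toNNReal ((1 - α) * P)))
    (hindep : IndepFun X₁ X₂ μ) :
    let b₂ : ℝ := α * P / (α * P + N₁)
    let U₁ : Ω → ℝ := fun ω => b₂ * X₂ ω + X₁ ω
    let U₂ : Ω → ℝ := X₂
    -- log Radon–Nikodym derivative of the joint law w.r.t. the product of marginals
    let rn : Ω → ℝ := fun ω =>
      (((μ.map fun ω' => (U₁ ω', U₂ ω')).rnDeriv
        ((μ.map U₁).prod (μ.map U₂))) (U₁ ω, U₂ ω)).toReal
    -- KL divergence in nats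
    (∫ ω, Real.log (rn ω) ∂μ
      = (1 / 2) * Real.log ((b₂ ^ 2 * ((1 - α) * P) + α * P) / (α * P))) ∧
    -- equivalently, mutual information in bits
    (∫ ω, Real.logb 2 (rn ω) ∂μ
      = (1 / 2) * Real.logb 2 ((b₂ ^ 2 * ((1 - α) * P) + α * P) / (α * P))) := by
  intro b₂ U₁ U₂ rn
  obtain ⟨hα0, hα1⟩ := hα
  set v₁ : ℝ := α * P with hv₁def
  set v₂ : ℝ := (1 - α) * P with hv₂def
  have hv₁ : 0 < v₁ := by positivity
  have hv₂ : 0 < v₂ := mul_pos (by linarith) hP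
  set c : ℝ := b₂ with hcdef
  set s : ℝ := v₁ + c ^ 2 * v₂ with hsdef
  have hs : 0 < s := by positivity
  -- measurability
  have hmU₁ : Measurable U₁ := (hmX₂.const_mul c).add hmX₁
  have hmU : Measurable fun ω => (U₁ ω, U₂ ω) := hmU₁.prodMk hmX₂
  -- joint law of (X₁, X₂)
  have h1 : μ.map (fun ω => (X₁ ω, X₂ ω))
      = (gaussianReal 0 v₁.toNNReal).prod (gaussianReal 0 v₂.toNNReal) := by
    rw [← hX₁, ← hX₂]
    exact (indepFun_iff_map_prod_eq_prod_map_map hmX₁.aemeasurable hmX₂.aemeasurable).mp hindep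
  -- joint law of (U₁, U₂)
  have hjoint : μ.map (fun ω => (U₁ ω, U₂ ω))
      = ((volume : Measure ℝ).prod volume).withDensity
          (fun p => gaussianPDF 0 v₁.toNNReal (p.1 - c * p.2) * gaussianPDF 0 v₂.toNNReal p.2) := by
    have h2 : (fun ω => (U₁ ω, U₂ ω)) = (DPAux3.shear c) ∘ (fun ω => (X₁ ω, X₂ ω)) := rfl
    rw [h2, ← Measure.map_map (DPAux3.shear c).measurable (hmX₁.prodMk hmX₂), h1,
      DPAux3.gaussian_prod_eq (DPAux2.toNNReal_ne_zero hv₁) (DPAux2.toNNReal_ne_zero hv₂),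
      DPAux3.map_withDensity_equiv (DPAux3.shear c) (DPAux3.measurePreserving_shear c)
        (h := fun p => gaussianPDF 0 v₁.toNNReal p.1 * gaussianPDF 0 v₂.toNNReal p.2)
        (((measurable_gaussianPDF _ _).comp measurable_fst).mul
          ((measurable_gaussianPDF _ _).comp measurable_snd))]
    rfl
  -- marginal laws
  have hmargU₂ : μ.map U₂ = gaussianReal 0 v₂.toNNReal := hX₂
  have hmargU₁ : μ.map U₁ = gaussianReal 0 s.toNNReal := by
    have hfst : U₁ = Prod.fst ∘ (fun ω => (U₁ ω, U₂ ω)) := rfl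
    rw [hfst, ← Measure.map_map measurable_fst hmU, hjoint,
      DPAux3.map_fst_density hv₁ hv₂ c]
  -- the density of the joint w.r.t. the product of marginals
  set g : ℝ × ℝ → ENNReal := fun p =>
    ENNReal.ofReal (gaussianPDFReal 0 v₁.toNNReal (p.1 - c * p.2)
      / gaussianPDFReal 0 s.toNNReal p.1) with hgdef
  have hg : Measurable g :=
    (((measurable_gaussianPDFReal _ _).comp (measurable_fst.sub (measurable_snd.const_mul c))).div
      ((measurable_gaussianPDFReal _ _).comp measurable_fst)).ennreal_ofReal
  have hkey : μ.map (fun ω => (U₁ ω, U₂ ω))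
      = ((μ.map U₁).prod (μ.map U₂)).withDensity g := by
    rw [hmargU₁, hmargU₂,
      DPAux3.gaussian_prod_eq (DPAux2.toNNReal_ne_zero hs) (DPAux2.toNNReal_ne_zero hv₂),
      ← withDensity_mul _ (show Measurable fun p : ℝ × ℝ =>
            gaussianPDF 0 s.toNNReal p.1 * gaussianPDF 0 v₂.toNNReal p.2 from
          ((measurable_gaussianPDF _ _).comp measurable_fst).mul
            ((measurable_gaussianPDF _ _).comp measurable_snd)) hg, hjoint]
    congr 1
    funext p
    have hpos : 0 < gaussianPDFReal 0 s.toNNReal p.1 :=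
      gaussianPDFReal_pos _ _ _ (DPAux2.toNNReal_ne_zero hs)
    simp only [Pi.mul_apply, Function.comp_apply, gaussianPDF, hgdef]
    rw [← ENNReal.ofReal_mul (gaussianPDFReal_nonneg _ _ _),
      ← ENNReal.ofReal_mul (gaussianPDFReal_nonneg _ _ _),
      ← ENNReal.ofReal_mul (mul_nonneg (gaussianPDFReal_nonneg _ _ _)
        (gaussianPDFReal_nonneg _ _ _))]
    congr 1
    field_simp
  haveI : IsProbabilityMeasure (μ.map U₁) := Measure.isProbabilityMeasure_map hmU₁.aemeasurable
  haveI : IsProbabilityMeasure (μ.map U₂) := Measure.isProbabilityMeasure_map hmX₂.aemeasurable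
  have hrnDeriv : (μ.map (fun ω => (U₁ ω, U₂ ω))).rnDeriv ((μ.map U₁).prod (μ.map U₂))
      =ᵐ[(μ.map U₁).prod (μ.map U₂)] g := by
    rw [hkey]
    exact Measure.rnDeriv_withDensity _ hg
  have hac : μ.map (fun ω => (U₁ ω, U₂ ω)) ≪ (μ.map U₁).prod (μ.map U₂) := by
    rw [hkey]; exact withDensity_absolutelyContinuous _ _
  have hae : ∀ᵐ ω ∂μ,
      ((μ.map (fun ω' => (U₁ ω', U₂ ω'))).rnDeriv ((μ.map U₁).prod (μ.map U₂))) (U₁ ω, U₂ ω)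
        = g (U₁ ω, U₂ ω) :=
    ae_of_ae_map hmU.aemeasurable (hrnDeriv.filter_mono hac.ae_le)
  -- identify rn with the explicit density ratio
  have hae2 : ∀ᵐ ω ∂μ, rn ω
      = gaussianPDFReal 0 v₁.toNNReal (X₁ ω) / gaussianPDFReal 0 s.toNNReal (U₁ ω) := by
    filter_upwards [hae] with ω hω
    have hXeq : U₁ ω - c * U₂ ω = X₁ ω := by
      show c * X₂ ω + X₁ ω - c * X₂ ω = X₁ ω; ring
    calc rn ω = (g (U₁ ω, U₂ ω)).toReal := by rw [show rn ω = _ from congrArg ENNReal.toReal hω]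
    _ = gaussianPDFReal 0 v₁.toNNReal (X₁ ω) / gaussianPDFReal 0 s.toNNReal (U₁ ω) := by
        rw [hgdef]
        simp only
        rw [hXeq, ENNReal.toReal_ofReal
          (div_nonneg (gaussianPDFReal_nonneg _ _ _) (gaussianPDFReal_nonneg _ _ _))]
  -- pointwise log identity
  have hlog : ∀ᵐ ω ∂μ, Real.log (rn ω)
      = Real.log (gaussianPDFReal 0 v₁.toNNReal (X₁ ω))
        - Real.log (gaussianPDFReal 0 s.toNNReal (U₁ ω)) := by
    filter_upwards [hae2] with ω hω
    rw [hω, Real.log_div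
      (gaussianPDFReal_pos _ _ _ (DPAux2.toNNReal_ne_zero hv₁)).ne'
      (gaussianPDFReal_pos _ _ _ (DPAux2.toNNReal_ne_zero hs)).ne']
  -- integrability
  have hint1 : Integrable (fun ω => Real.log (gaussianPDFReal 0 v₁.toNNReal (X₁ ω))) μ := by
    have := DPAux2.integrable_log_pdf_gaussianReal hv₁ hv₁
    rw [← hX₁] at this
    exact ((integrable_map_measure
      ((measurable_gaussianPDFReal _ _).log.aestronglyMeasurable) hmX₁.aemeasurable).mp this)
  have hint2 : Integrable (fun ω => Real.log (gaussianPDFReal 0 s.toNNReal (U₁ ω))) μ := by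
    have := DPAux2.integrable_log_pdf_gaussianReal hs hs
    rw [← hmargU₁] at this
    exact ((integrable_map_measure
      ((measurable_gaussianPDFReal _ _).log.aestronglyMeasurable) hmU₁.aemeasurable).mp this)
  -- compute the integral
  have hval1 : ∫ ω, Real.log (gaussianPDFReal 0 v₁.toNNReal (X₁ ω)) ∂μ
      = -Real.log (√(2 * π * v₁)) - v₁ / (2 * v₁) := by
    rw [← DPAux2.integral_log_pdf_gaussianReal hv₁ hv₁, ← hX₁,
      integral_map hmX₁.aemeasurable ((measurable_gaussianPDFReal _ _).log.aestronglyMeasurable)]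
  have hval2 : ∫ ω, Real.log (gaussianPDFReal 0 s.toNNReal (U₁ ω)) ∂μ
      = -Real.log (√(2 * π * s)) - s / (2 * s) := by
    rw [← DPAux2.integral_log_pdf_gaussianReal hs hs, ← hmargU₁,
      integral_map hmU₁.aemeasurable ((measurable_gaussianPDFReal _ _).log.aestronglyMeasurable)]
  have hmain : ∫ ω, Real.log (rn ω) ∂μ = (1 / 2) * Real.log ((c ^ 2 * v₂ + v₁) / v₁) := by
    rw [integral_congr_ae hlog, integral_sub hint1 hint2, hval1, hval2]
    have e1 : v₁ / (2 * v₁) = 1 / 2 := by rw [div_eq_iff (by positivity)]; ring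
    have e2 : s / (2 * s) = 1 / 2 := by rw [div_eq_iff (by positivity)]; ring
    have hsrw : c ^ 2 * v₂ + v₁ = s := by rw [hsdef]; ring
    rw [e1, e2, hsrw, Real.log_div (by positivity) (by positivity),
      Real.log_sqrt (by positivity), Real.log_sqrt (by positivity),
      Real.log_mul (by positivity) hs.ne', Real.log_mul (by positivity) hv₁.ne']
    ring
  refine ⟨hmain, ?_⟩
  have : (fun ω => Real.logb 2 (rn ω)) = fun ω => Real.log (rn ω) / Real.log 2 := by
    funext ω; rw [Real.logb]
  rw [this, integral_div, hmain, Real.logb]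
  ring
end
end

section
/- Distribution of the information density H_{n₂} under the conditional channel law: fix n ≥ 1, P₁, P₂, N₂ > 0, P = P₁+P₂ and x ∈ ℝⁿ with ‖x‖² = nP₂; set σ² = (P+N₂)/(P₁+N₂). Let W ~ N(0,(P₁+N₂)Iₙ), Y = x + W, and H = log₂[ φ_{x,P₁+N₂}(Y) / φ_{0,P+N₂}(Y) ]. Then H has the same distribution as (n/2)·log₂σ² + (nP₂/(P₁+N₂))·(log₂e)/(2σ²) + (log₂e/(2σ²))·Σ_{i=1}^n [ (1−σ²)S_i² + 2√(P₂/(P₁+N₂))·S_i ], where S₁,…,S_n are i.i.d. N(0,1). -/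
open MeasureTheory ProbabilityTheory Real

noncomputable section

/-- Law of a vector with independent Gaussian entries: entry `i` has mean `m i`
and variance `v`. -/
def gaussPi (n : ℕ) (m : Fin n → ℝ) (v : NNReal) : Measure (Fin n → ℝ) :=
  Measure.pi fun i => gaussianReal (m i) v

/-- Density of the n-dimensional Gaussian with mean vector `m` and covariance `v·Iₙ`. -/
def gaussDensity (n : ℕ) (m : Fin n → ℝ) (v : ℝ) (y : Fin n → ℝ) : ℝ :=
  ∏ i, (Real.sqrt (2 * Real.pi * v))⁻¹ * Real.exp (-(y i - m i) ^ 2 / (2 * v))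

open Finset
open scoped ENNReal NNReal

theorem lintegral_pi_prod' {n : ℕ} {E : Fin n → Type*} [∀ i, MeasurableSpace (E i)]
    (μ : ∀ i, Measure (E i)) [∀ i, SigmaFinite (μ i)] (f : ∀ i, E i → ℝ≥0∞)
    (hf : ∀ i, Measurable (f i)) :
    ∫⁻ x, ∏ i, f i (x i) ∂(Measure.pi μ) = ∏ i, ∫⁻ y, f i y ∂(μ i) := by
  induction n with
  | zero => simp
  | succ n ih =>
    rw [← ((measurePreserving_piFinSuccAbove μ 0).symm).lintegral_comp_emb
      (MeasurableEquiv.measurableEmbedding _)]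
    simp_rw [MeasurableEquiv.piFinSuccAbove_symm_apply, Fin.insertNthEquiv, Equiv.coe_fn_mk,
      Fin.insertNth_zero, Fin.prod_univ_succ, Fin.zero_succAbove, Fin.cons_zero,
      Fin.cons_succ]
    have hg : Measurable fun (a : ∀ j : Fin n, E j.succ) => ∏ x : Fin n, f x.succ (a x) :=
      Finset.measurable_prod _ fun i _ => (hf i.succ).comp (measurable_pi_apply i)
    have hL := lintegral_prod_mul (μ := μ 0) (ν := Measure.pi fun j : Fin n => μ j.succ) (hf 0).aemeasurable hg.aemeasurable
    erw [hL, ih _ _ fun i => hf _]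

theorem gaussPi_std (n : ℕ) :
    gaussPi n 0 1 = (volume : Measure (Fin n → ℝ)).withDensity
      (fun y => ∏ i, gaussianPDF 0 1 (y i)) := by
  unfold gaussPi
  simp only [Pi.zero_apply]
  apply Measure.pi_eq
  intro s hs
  rw [withDensity_apply _ (MeasurableSet.univ_pi hs), ← lintegral_indicator (MeasurableSet.univ_pi hs)]
  have hind : (Set.univ.pi s).indicator (fun y => ∏ i, gaussianPDF 0 1 (y i))
      = fun y => ∏ i, (s i).indicator (gaussianPDF 0 1) (y i) := by
    funext y
    by_cases hy : y ∈ Set.univ.pi s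
    · rw [Set.indicator_of_mem hy]
      exact Finset.prod_congr rfl fun i _ =>
        (Set.indicator_of_mem (hy i (Set.mem_univ i)) _).symm
    · rw [Set.indicator_of_notMem hy]
      rw [Set.mem_univ_pi] at hy
      push_neg at hy
      obtain ⟨i, hi⟩ := hy
      exact (Finset.prod_eq_zero (Finset.mem_univ i)
        (Set.indicator_of_notMem hi _)).symm
  rw [hind, volume_pi, lintegral_pi_prod' _ _
    (fun i => (measurable_gaussianPDF 0 1).indicator (hs i))]
  refine Finset.prod_congr rfl fun i _ => ?_
  rw [lintegral_indicator (hs i), gaussianReal_apply _ one_ne_zero (s i)]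

theorem withDensity_map_equiv' {α β : Type*} [MeasurableSpace α] [MeasurableSpace β]
    {μ : Measure α} {ν : Measure β} (e : α ≃ᵐ β) (h : MeasurePreserving e μ ν)
    {f : α → ℝ≥0∞} (hf : Measurable f) :
    (μ.withDensity f).map e = ν.withDensity (fun y => f (e.symm y)) := by
  ext s hs
  rw [Measure.map_apply e.measurable hs,
    withDensity_apply _ (e.measurable hs),
    withDensity_apply _ hs, ← h.map_eq,
    setLIntegral_map (f := fun a => f (e.symm a)) hs (hf.comp e.symm.measurable)
      e.measurable]
  refine setLIntegral_congr_fun (e.measurable hs) (fun a _ => ?_)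
  rw [e.symm_apply_apply]

theorem sum_sq_eq_normsq {n : ℕ} (z : EuclideanSpace ℝ (Fin n)) :
    ∑ i, z i ^ 2 = ‖z‖ ^ 2 := by
  rw [EuclideanSpace.norm_eq, Real.sq_sqrt (by positivity)]
  exact Finset.sum_congr rfl fun i _ => by rw [Real.norm_eq_abs, sq_abs]

theorem densInv {n : ℕ} (y z : Fin n → ℝ) (h : ∑ i, z i ^ 2 = ∑ i, y i ^ 2) :
    ∏ i, gaussianPDF 0 1 (z i) = ∏ i, gaussianPDF 0 1 (y i) := by
  have key : ∀ u : Fin n → ℝ, ∏ i, gaussianPDF 0 1 (u i)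
      = ENNReal.ofReal ((Real.sqrt (2 * π))⁻¹ ^ n * Real.exp (-(∑ i, u i ^ 2) / 2)) := by
    intro u
    simp only [gaussianPDF]
    rw [← ENNReal.ofReal_prod_of_nonneg fun i _ => gaussianPDFReal_nonneg 0 1 (u i)]
    congr 1
    simp only [gaussianPDFReal]
    rw [Finset.prod_mul_distrib, Finset.prod_const, ← Real.exp_sum]
    simp only [NNReal.coe_one, mul_one, sub_zero, Finset.card_univ, Fintype.card_fin]
    congr 1
    rw [← Finset.sum_div, ← Finset.sum_neg_distrib]
  rw [key z, key y, h]

theorem gaussPi_map_isometry {n : ℕ}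
    (e : EuclideanSpace ℝ (Fin n) ≃ₗᵢ[ℝ] EuclideanSpace ℝ (Fin n)) :
    (gaussPi n 0 1).map
      ((((MeasurableEquiv.toLp 2 (Fin n → ℝ)).trans
        e.toHomeomorph.toMeasurableEquiv).trans
        (MeasurableEquiv.toLp 2 (Fin n → ℝ)).symm)) = gaussPi n 0 1 := by
  set T : (Fin n → ℝ) ≃ᵐ (Fin n → ℝ) :=
    (((MeasurableEquiv.toLp 2 (Fin n → ℝ)).trans
        e.toHomeomorph.toMeasurableEquiv).trans
        (MeasurableEquiv.toLp 2 (Fin n → ℝ)).symm) with hT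
  have hvol : MeasurePreserving T volume volume := by
    have h1 := (EuclideanSpace.volume_preserving_symm_measurableEquiv_toLp (Fin n)).symm
    have h2 := e.measurePreserving
    have h3 := EuclideanSpace.volume_preserving_symm_measurableEquiv_toLp (Fin n)
    exact h3.comp (h2.comp h1)
  have hρ : Measurable fun y : Fin n → ℝ => ∏ i, gaussianPDF 0 1 (y i) :=
    Finset.measurable_prod _ fun i _ =>
      (measurable_gaussianPDF 0 1).comp (measurable_pi_apply i)
  rw [gaussPi_std, withDensity_map_equiv' T hvol hρ]
  congr 1
  funext y
  refine densInv y _ ?_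
  have : (T.symm y : Fin n → ℝ)
      = (e.symm (WithLp.toLp 2 y)).ofLp := rfl
  rw [this]
  rw [sum_sq_eq_normsq, e.symm.norm_map, ← sum_sq_eq_normsq (WithLp.toLp 2 y)]

theorem gaussPi_map_scale {n : ℕ} {v : ℝ} (hv : 0 < v) :
    (gaussPi n 0 (Real.toNNReal v)).map (fun y i => (Real.sqrt v)⁻¹ * y i)
      = gaussPi n 0 1 := by
  have hvar : (NNReal.mk (((Real.sqrt v)⁻¹) ^ 2) (sq_nonneg _) * Real.toNNReal v : NNReal) = 1 := by
    ext
    rw [NNReal.coe_mul, NNReal.coe_one, NNReal.coe_mk, Real.coe_toNNReal _ hv.le,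
      inv_pow, Real.sq_sqrt hv.le]
    field_simp
  have h1 : MeasurePreserving (fun t : ℝ => (Real.sqrt v)⁻¹ * t)
      (gaussianReal 0 (Real.toNNReal v)) (gaussianReal 0 1) := by
    refine ⟨measurable_const_mul _, ?_⟩
    rw [show (fun t : ℝ => (Real.sqrt v)⁻¹ * t) = ((Real.sqrt v)⁻¹ * ·) from rfl,
      gaussianReal_map_const_mul, mul_zero, hvar]
  unfold gaussPi
  simp only [Pi.zero_apply]
  exact (measurePreserving_pi _ _ fun _ => h1).map_eq

theorem ptwise (n : ℕ) (P₁ P₂ N₂ P : ℝ) (hP₁ : 0 < P₁) (hP₂ : 0 < P₂) (hN₂ : 0 < N₂)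
    (hP : P = P₁ + P₂) (x : Fin n → ℝ) (hx : ∑ i, (x i) ^ 2 = (n : ℝ) * P₂)
    (w : Fin n → ℝ) :
    Real.logb 2 (gaussDensity n x (P₁ + N₂) (x + w) / gaussDensity n 0 (P + N₂) (x + w))
      = ((n : ℝ) / 2) * Real.logb 2 ((P + N₂) / (P₁ + N₂))
        + ((n : ℝ) * P₂ / (P₁ + N₂)) * Real.logb 2 (Real.exp 1)
            / (2 * ((P + N₂) / (P₁ + N₂)))
        + (Real.logb 2 (Real.exp 1) / (2 * ((P + N₂) / (P₁ + N₂)))) *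
          ∑ i, ((1 - (P + N₂) / (P₁ + N₂)) * ((Real.sqrt (P₁ + N₂))⁻¹ * w i) ^ 2
            + 2 * ((Real.sqrt (P₁ + N₂))⁻¹ * x i) * ((Real.sqrt (P₁ + N₂))⁻¹ * w i)) := by
  have hv₁ : (0:ℝ) < P₁ + N₂ := by linarith
  have hv₂ : (0:ℝ) < P + N₂ := by rw [hP]; linarith
  set v₁ := P₁ + N₂ with hv₁def
  set v₂ := P + N₂ with hv₂def
  have hπ : (0:ℝ) < 2 * π := by positivity
  have hL2 : Real.log 2 ≠ 0 := (Real.log_pos one_lt_two).ne'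
  have hprod : ∀ (m y : Fin n → ℝ) (v : ℝ), gaussDensity n m v y
      = ((Real.sqrt (2 * π * v))⁻¹) ^ n * Real.exp (∑ i, -(y i - m i) ^ 2 / (2 * v)) := by
    intro m y v
    unfold gaussDensity
    rw [Finset.prod_mul_distrib, Finset.prod_const, Finset.card_univ, Fintype.card_fin,
      Real.exp_sum]
  have h1 : gaussDensity n x v₁ (x + w)
      = ((Real.sqrt (2 * π * v₁))⁻¹) ^ n * Real.exp (∑ i, -(w i) ^ 2 / (2 * v₁)) := by
    rw [hprod]
    congr 2
    exact Finset.sum_congr rfl fun i _ => by simp [add_sub_cancel_left]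
  have h2 : gaussDensity n 0 v₂ (x + w)
      = ((Real.sqrt (2 * π * v₂))⁻¹) ^ n
        * Real.exp (∑ i, -(x i + w i) ^ 2 / (2 * v₂)) := by
    rw [hprod]
    congr 2
    exact Finset.sum_congr rfl fun i _ => by simp
  set A := ∑ i, -(w i) ^ 2 / (2 * v₁) with hA
  set Bs := ∑ i, -(x i + w i) ^ 2 / (2 * v₂) with hB
  set Srest := ∑ i, ((1 - v₂ / v₁) * ((Real.sqrt v₁)⁻¹ * w i) ^ 2
      + 2 * ((Real.sqrt v₁)⁻¹ * x i) * ((Real.sqrt v₁)⁻¹ * w i)) with hS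
  have key : ∀ u t : ℝ, (u + t) ^ 2 / (2 * v₂) - t ^ 2 / (2 * v₁)
      = u ^ 2 / (2 * v₂) + (1 / (2 * (v₂ / v₁)))
        * ((1 - v₂ / v₁) * ((Real.sqrt v₁)⁻¹ * t) ^ 2
          + 2 * ((Real.sqrt v₁)⁻¹ * u) * ((Real.sqrt v₁)⁻¹ * t)) := by
    intro u t
    have h2' : ((Real.sqrt v₁)⁻¹ * t) ^ 2 = t ^ 2 / v₁ := by
      rw [mul_pow, inv_pow, Real.sq_sqrt hv₁.le]; ring
    have h3' : ((Real.sqrt v₁)⁻¹ * u) * ((Real.sqrt v₁)⁻¹ * t) = u * t / v₁ := by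
      rw [mul_mul_mul_comm, ← sq, inv_pow, Real.sq_sqrt hv₁.le]; ring
    rw [h2', mul_assoc 2, h3']
    field_simp
    ring
  have hAB : A - Bs = (n : ℝ) * P₂ / (2 * v₂) + (1 / (2 * (v₂ / v₁))) * Srest := by
    rw [hA, hB, hS, ← Finset.sum_sub_distrib]
    have : ∀ i : Fin n, -(w i) ^ 2 / (2 * v₁) - -(x i + w i) ^ 2 / (2 * v₂)
        = x i ^ 2 / (2 * v₂) + (1 / (2 * (v₂ / v₁)))
          * ((1 - v₂ / v₁) * ((Real.sqrt v₁)⁻¹ * w i) ^ 2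
            + 2 * ((Real.sqrt v₁)⁻¹ * x i) * ((Real.sqrt v₁)⁻¹ * w i)) := by
      intro i
      rw [show -(w i) ^ 2 / (2 * v₁) - -(x i + w i) ^ 2 / (2 * v₂)
          = (x i + w i) ^ 2 / (2 * v₂) - (w i) ^ 2 / (2 * v₁) from by ring]
      exact key (x i) (w i)
    rw [Finset.sum_congr rfl fun i _ => this i, Finset.sum_add_distrib,
      ← Finset.sum_div, hx, ← Finset.mul_sum]
  rw [h1, h2]
  rw [Real.logb, Real.log_div (by positivity) (by positivity),
    Real.log_mul (by positivity) (Real.exp_pos _).ne',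
    Real.log_mul (by positivity) (Real.exp_pos _).ne',
    Real.log_pow, Real.log_pow, Real.log_exp, Real.log_exp]
  simp only [Real.logb, Real.log_exp]
  have hc1 : Real.log (Real.sqrt (2 * π * v₁))⁻¹
      = -(Real.log (2 * π) + Real.log v₁) / 2 := by
    rw [Real.log_inv, Real.log_sqrt (by positivity), Real.log_mul hπ.ne' hv₁.ne']
    ring
  have hc2 : Real.log (Real.sqrt (2 * π * v₂))⁻¹
      = -(Real.log (2 * π) + Real.log v₂) / 2 := by
    rw [Real.log_inv, Real.log_sqrt (by positivity), Real.log_mul hπ.ne' hv₂.ne']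
    ring
  have hlogσ : Real.log (v₂ / v₁) = Real.log v₂ - Real.log v₁ :=
    Real.log_div hv₂.ne' hv₁.ne'
  have hA' : A = Bs + ((n : ℝ) * P₂ / (2 * v₂) + (1 / (2 * (v₂ / v₁))) * Srest) := by
    linarith [hAB]
  rw [hc1, hc2, hlogσ, hA']
  have hσ : v₂ / v₁ ≠ 0 := (div_pos hv₂ hv₁).ne'
  field_simp
  ring

/-- Distribution of the information density `H_{n₂}` under the conditional channel
law, for user 2 of the Gaussian BC under dirty paper coding. -/
theorem info_density_H_user2
    (n : ℕ) (hn : 1 ≤ n)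
    (P₁ P₂ N₂ : ℝ) (hP₁ : 0 < P₁) (hP₂ : 0 < P₂) (hN₂ : 0 < N₂)
    (P : ℝ) (hP : P = P₁ + P₂)
    (x : Fin n → ℝ) (hx : ∑ i, (x i) ^ 2 = (n : ℝ) * P₂)
    (Ω : Type*) [MeasurableSpace Ω] (μ : Measure Ω) [IsProbabilityMeasure μ]
    (W : Ω → (Fin n → ℝ)) (hmW : Measurable W)
    (hW : μ.map W = gaussPi n 0 (Real.toNNReal (P₁ + N₂)))
    (Ω' : Type*) [MeasurableSpace Ω'] (μ' : Measure Ω') [IsProbabilityMeasure μ']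
    (S : Ω' → (Fin n → ℝ)) (hmS : Measurable S)
    (hS : μ'.map S = gaussPi n 0 1) :
    let σsq : ℝ := (P + N₂) / (P₁ + N₂)
    let H : (Fin n → ℝ) → ℝ := fun y =>
      Real.logb 2 (gaussDensity n x (P₁ + N₂) y / gaussDensity n 0 (P + N₂) y)
    IdentDistrib (fun ω => H (x + W ω))
      (fun ω' => ((n : ℝ) / 2) * Real.logb 2 σsq
        + ((n : ℝ) * P₂ / (P₁ + N₂)) * Real.logb 2 (Real.exp 1) / (2 * σsq)
        + (Real.logb 2 (Real.exp 1) / (2 * σsq)) *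
          ∑ i, ((1 - σsq) * (S ω' i) ^ 2
            + 2 * Real.sqrt (P₂ / (P₁ + N₂)) * (S ω' i)))
      μ μ' := by
  intro σsq H
  have hv₁ : (0:ℝ) < P₁ + N₂ := by linarith
  set a : Fin n → ℝ := fun i => (Real.sqrt (P₁ + N₂))⁻¹ * x i with ha
  set b : Fin n → ℝ := fun _ => Real.sqrt (P₂ / (P₁ + N₂)) with hb
  set Φ : (Fin n → ℝ) → (Fin n → ℝ) → ℝ := fun c s =>
    ((n : ℝ) / 2) * Real.logb 2 σsq
      + ((n : ℝ) * P₂ / (P₁ + N₂)) * Real.logb 2 (Real.exp 1) / (2 * σsq)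
      + (Real.logb 2 (Real.exp 1) / (2 * σsq)) *
        ∑ i, ((1 - σsq) * (s i) ^ 2 + 2 * c i * (s i)) with hΦ
  have hΦm : ∀ c, Measurable (Φ c) := by
    intro c
    have hF : Measurable fun s : Fin n → ℝ =>
        ∑ i, ((1 - σsq) * (s i) ^ 2 + 2 * c i * (s i)) :=
      Finset.measurable_sum _ fun i _ =>
        (((measurable_pi_apply i).pow_const 2).const_mul _).add
          ((measurable_pi_apply i).const_mul _)
    exact measurable_const.add (hF.const_mul _)
  set U : Ω → (Fin n → ℝ) := fun ω i => (Real.sqrt (P₁ + N₂))⁻¹ * W ω i with hUdef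
  have hU : Measurable U := measurable_pi_iff.mpr fun i =>
    ((measurable_pi_apply i).comp hmW).const_mul _
  have hfun1 : (fun ω => H (x + W ω)) = fun ω => Φ a (U ω) :=
    funext fun ω => ptwise n P₁ P₂ N₂ P hP₁ hP₂ hN₂ hP x hx (W ω)
  have hUlaw : μ.map U = gaussPi n 0 1 := by
    have hg : Measurable fun y : Fin n → ℝ => fun i => (Real.sqrt (P₁ + N₂))⁻¹ * y i :=
      measurable_pi_iff.mpr fun i => (measurable_pi_apply i).const_mul _
    calc μ.map U = (μ.map W).map (fun y i => (Real.sqrt (P₁ + N₂))⁻¹ * y i) :=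
          (Measure.map_map hg hmW).symm
      _ = gaussPi n 0 1 := by rw [hW]; exact gaussPi_map_scale hv₁
  -- isometry sending a to b
  have hab : ∑ i, (a i) ^ 2 = ∑ i, (b i) ^ 2 := by
    simp only [ha, hb, mul_pow, inv_pow, Real.sq_sqrt hv₁.le,
      Real.sq_sqrt (div_nonneg hP₂.le hv₁.le)]
    rw [← Finset.mul_sum, hx, Finset.sum_const, Finset.card_univ, Fintype.card_fin,
      nsmul_eq_mul]
    field_simp
  set aE : EuclideanSpace ℝ (Fin n) := (WithLp.equiv 2 (Fin n → ℝ)).symm a with haE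
  set bE : EuclideanSpace ℝ (Fin n) := (WithLp.equiv 2 (Fin n → ℝ)).symm b with hbE
  have hnorm : ‖aE‖ = ‖bE‖ := by
    rw [EuclideanSpace.norm_eq, EuclideanSpace.norm_eq]
    congr 1
    simpa [haE, hbE, WithLp.equiv_symm_apply, Real.norm_eq_abs, sq_abs] using hab
  set e : EuclideanSpace ℝ (Fin n) ≃ₗᵢ[ℝ] EuclideanSpace ℝ (Fin n) :=
    Submodule.reflection (ℝ ∙ (aE - bE))ᗮ with he_def
  have he : e aE = bE := Submodule.reflection_sub hnorm
  set T : (Fin n → ℝ) ≃ᵐ (Fin n → ℝ) :=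
    (((MeasurableEquiv.toLp 2 (Fin n → ℝ)).trans
        e.toHomeomorph.toMeasurableEquiv).trans
        (MeasurableEquiv.toLp 2 (Fin n → ℝ)).symm) with hT
  have hrot : (gaussPi n 0 1).map T = gaussPi n 0 1 := gaussPi_map_isometry e
  have hΦcomp : ∀ s : Fin n → ℝ, Φ b (T s) = Φ a s := by
    intro s
    have hsplit : ∀ (c s' : Fin n → ℝ),
        ∑ i, ((1 - σsq) * (s' i) ^ 2 + 2 * c i * (s' i))
          = (1 - σsq) * (∑ i, (s' i) ^ 2) + 2 * ∑ i, c i * s' i := by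
      intro c s'
      rw [Finset.sum_add_distrib, Finset.mul_sum, Finset.mul_sum]
      congr 1
      exact Finset.sum_congr rfl fun i _ => by ring
    set sE : EuclideanSpace ℝ (Fin n) := (WithLp.equiv 2 (Fin n → ℝ)).symm s with hsE
    have hTs : ∀ i, T s i = e sE i := fun i => rfl
    have hsq : ∑ i, ((T s) i) ^ 2 = ∑ i, (s i) ^ 2 := by
      simp_rw [hTs]
      rw [sum_sq_eq_normsq (e sE), e.norm_map, ← sum_sq_eq_normsq sE]
      simp [hsE, WithLp.equiv_symm_apply]
    have hin : ∑ i, b i * (T s) i = ∑ i, a i * s i := by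
      have h1 : (inner ℝ bE (e sE) : ℝ) = inner ℝ aE sE := by
        rw [← he, LinearIsometryEquiv.inner_map_map]
      simp only [PiLp.inner_apply, RCLike.inner_apply', conj_trivial, haE, hbE, hsE,
        WithLp.equiv_symm_apply, WithLp.ofLp_toLp] at h1
      simp_rw [hTs]
      exact h1
    simp only [hΦ, hsplit, hsq, hin]
  have hmain : μ.map (fun ω => Φ a (U ω)) = μ'.map (fun ω' => Φ b (S ω')) := by
    calc μ.map (fun ω => Φ a (U ω)) = (μ.map U).map (Φ a) :=
          (Measure.map_map (hΦm a) hU).symm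
      _ = (gaussPi n 0 1).map (Φ a) := by rw [hUlaw]
      _ = ((gaussPi n 0 1).map T).map (Φ b) := by
          rw [Measure.map_map (hΦm b) T.measurable]
          congr 1
          funext s
          exact (hΦcomp s).symm
      _ = (gaussPi n 0 1).map (Φ b) := by rw [hrot]
      _ = (μ'.map S).map (Φ b) := by rw [hS]
      _ = μ'.map (fun ω' => Φ b (S ω')) := Measure.map_map (hΦm b) hmS
  rw [hfun1]
  exact ⟨((hΦm a).comp hU).aemeasurable, ((hΦm b).comp hmS).aemeasurable, hmain⟩
end
end
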